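/- Let G be a connected graph with n vertices and n+k-2 edges, and let t be a positive integer. Define c = 1/(t+2) for t ∈ {1,2} and c = 1/(4t-5) for t ≥ 3. If 1 ≤ k ≤ c·n² and n ≥ 3·binom(1/c, 2), then r(G, tK_2) = n + t - 1. -/

import Mathlib

open SimpleGraph Finset

/-- The graph `C` contains a copy of `G` (as a subgraph, via an injective map). -/
def ContainsCopy {V W : Type*} (C : SimpleGraph V) (G : SimpleGraph W) : Prop :=
  ∃ f : W ↪ V, ∀ u v : W, G.Adj u v → C.Adj (f u) (f v)

/-- `N` has the Ramsey property for `(G, H)`: every red-blue coloring of the edges of `K_N`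
(given by the red graph `C`) contains a red copy of `G` or a blue copy of `H`. -/
def IsRamsey {α β : Type*} (G : SimpleGraph α) (H : SimpleGraph β) (N : ℕ) : Prop :=
  ∀ C : SimpleGraph (Fin N), ContainsCopy C G ∨ ContainsCopy Cᶜ H

/-- The Ramsey number `r(G, H)`. -/
noncomputable def ramsey {α β : Type*} (G : SimpleGraph α) (H : SimpleGraph β) : ℕ :=
  sInf {N | IsRamsey G H N}

/-- The disjoint union of `t` copies of `H`. -/
def tCopies (t : ℕ) {β : Type*} (H : SimpleGraph β) : SimpleGraph (Fin t × β) where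
  Adj a b := a.1 = b.1 ∧ H.Adj a.2 b.2
  symm := ⟨fun _ _ h => ⟨h.1.symm, h.2.symm⟩⟩
  loopless := ⟨fun a h => H.loopless.irrefl a.2 h.2⟩

/-!
Lower bound: on `n + t - 2` vertices, colour a clique on `n - 1` vertices red and every other
edge blue. A red `G` has no isolated vertex, so it would need `n` vertices inside the clique,
and every blue edge meets the `t - 1` vertices outside it.

Upper bound: in a colouring of `K_{n+t-1}` without a blue `tK₂`, take a maximum blue matching
`M`, so `m := |M| ≤ t - 1`. The `n + t - 1 - 2m` unmatched vertices `U` span a red clique, and,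
as a maximum matching has no augmenting path of length three, every edge of `M` has an endpoint
`w` with at most one blue neighbour `z` in `U`. Turán's theorem gives `G` an independent set `I`
of size `2t - 2`, because `G` has only `n + k - 2 ≤ n + cn² - 2` edges, `1/c ≥ 4t - 5` and
`n ≥ 3 binom(1/c, 2)`. Now embed `G` so that the vertices outside `I` go to `U` minus the
(at most `m`) vertices `z`, and the vertices of `I` fill the remaining room in `U` and the `m`
endpoints `w`.
-/

namespace SimpleGraph

variable {V : Type*} [Fintype V] {G : SimpleGraph V}

theorem CliqueFree.two_mul_mul_card_edgeFinset_le [DecidableRel G.Adj] {r : ℕ}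
    (cf : G.CliqueFree (r + 1)) : 2 * r * #G.edgeFinset ≤ (r - 1) * Fintype.card V ^ 2 := by
  rcases r.eq_zero_or_pos with rfl | hr
  · simp
  obtain ⟨H, _, maxH⟩ := exists_isTuranMaximal (V := V) hr
  calc 2 * r * #G.edgeFinset ≤ 2 * r * #H.edgeFinset := Nat.mul_le_mul_left _ (maxH.2 cf)
    _ = 2 * r * #(turanGraph (Fintype.card V) r).edgeFinset := by
      rw [((isTuranMaximal_iff_nonempty_iso_turanGraph hr).mp maxH).some.card_edgeFinset_eq]
    _ ≤ _ := mul_card_edgeFinset_turanGraph_le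

theorem card_edgeFinset_add_card_edgeFinset_compl [DecidableEq V] [DecidableRel G.Adj] :
    #G.edgeFinset + #Gᶜ.edgeFinset = (Fintype.card V).choose 2 := by
  rw [← card_edgeFinset_top_eq_card_choose_two, ← card_union_of_disjoint
    (disjoint_edgeFinset.2 disjoint_compl_right), ← edgeFinset_sup]
  congr 1
  ext e
  simp only [mem_edgeFinset, sup_compl_eq_top]

/-- Turán's theorem for `Gᶜ`. -/
theorem exists_isNIndepSet_of_mul_lt_sq [DecidableRel G.Adj] {s : ℕ} (hs : 0 < s)
    (h : s * (2 * #G.edgeFinset + Fintype.card V) < Fintype.card V ^ 2) :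
    ∃ I, G.IsNIndepSet (s + 1) I := by
  classical
  by_contra! hI
  have hturan := CliqueFree.two_mul_mul_card_edgeFinset_le (G := Gᶜ) (r := s)
    fun I hI' => hI I ((isNClique_compl G).1 hI')
  have hcompl := card_edgeFinset_add_card_edgeFinset_compl (G := G)
  have hchoose : 2 * (Fintype.card V).choose 2 + Fintype.card V = Fintype.card V ^ 2 := by
    rw [Nat.choose_two_right, Nat.mul_div_cancel' (Nat.even_mul_pred_self _).two_dvd]
    cases Fintype.card V <;> simp [sq, Nat.mul_succ]
  obtain ⟨r, rfl⟩ := Nat.exists_eq_add_of_lt hs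
  simp only [zero_add, Nat.add_sub_cancel] at hturan
  nlinarith

end SimpleGraph

theorem mul_lt_sq_of_le_mul_sq {s n k c : ℚ} (hs : 1 ≤ s) (hc : 2 * s + 1 ≤ c⁻¹)
    (hk : k ≤ c * n ^ 2) (hn : 3 * (c⁻¹ * (c⁻¹ - 1) / 2) ≤ n) :
    s * (2 * (n + k - 2) + n) < n ^ 2 := by
  set a := c⁻¹
  have ha : 0 < a := by linarith
  have hka : k * a ≤ n ^ 2 := by
    have hc0 : c ≠ 0 := fun h => by simp [a, h] at ha
    calc k * a ≤ c * n ^ 2 * a := by gcongr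
      _ = n ^ 2 := by rw [mul_comm c, mul_assoc, mul_inv_cancel₀ hc0, mul_one]
  have hn' : 3 * s * a ≤ n := by nlinarith
  have hn0 : 0 ≤ n := by nlinarith
  nlinarith [mul_le_mul_of_nonneg_left hn' hn0]

theorem exists_isIndepSet_of_card_edgeFinset_le {V : Type*} [Fintype V]
    (G : SimpleGraph V) [DecidableRel G.Adj] {t k : ℕ} {c : ℚ} (ht : 1 ≤ t)
    (hc : 4 * (t : ℚ) - 5 ≤ c⁻¹) (hedge : #G.edgeFinset + 2 ≤ Fintype.card V + k)
    (hk : (k : ℚ) ≤ c * Fintype.card V ^ 2)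
    (hn : 3 * (c⁻¹ * (c⁻¹ - 1) / 2) ≤ Fintype.card V) :
    ∃ I : Finset V, G.IsIndepSet I ∧ 2 * t - 2 ≤ #I := by
  rcases eq_or_lt_of_le ht with rfl | ht2
  · exact ⟨∅, by simp, by simp⟩
  have hlt : (2 * t - 3) * (2 * #G.edgeFinset + Fintype.card V) < Fintype.card V ^ 2 := by
    have hs : ((2 * t - 3 : ℕ) : ℚ) = 2 * t - 3 := by
      rw [Nat.cast_sub (by omega)]
      push_cast
      ring
    have ht2' : (2 : ℚ) ≤ t := by exact_mod_cast ht2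
    have key := mul_lt_sq_of_le_mul_sq (s := 2 * t - 3) (by linarith) (by linarith) hk hn
    have hedge' : ((#G.edgeFinset : ℕ) : ℚ) + 2 ≤ Fintype.card V + k := by exact_mod_cast hedge
    rw [← hs] at key
    have hcast : (((2 * t - 3) * (2 * #G.edgeFinset + Fintype.card V) : ℕ) : ℚ) <
        ((Fintype.card V ^ 2 : ℕ) : ℚ) := by
      push_cast
      exact key.trans_le' (by gcongr; linarith)
    exact_mod_cast hcast
  obtain ⟨I, hI⟩ := G.exists_isNIndepSet_of_mul_lt_sq (by omega) hlt
  exact ⟨I, hI.isIndepSet, by rw [hI.card_eq]; omega⟩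

theorem exists_injective_mapsTo_of_card_le {α β : Type*} [Fintype α] [DecidableEq α]
    [DecidableEq β] {s : Finset α} {t u : Finset β} (htu : t ⊆ u) (hs : #s ≤ #t)
    (hu : Fintype.card α ≤ #u) :
    ∃ f : α → β, Function.Injective f ∧ Set.MapsTo f s t ∧ ∀ a, f a ∈ u := by
  rcases isEmpty_or_nonempty α with hα | hα
  · exact ⟨isEmptyElim, fun a => isEmptyElim a, fun a => isEmptyElim a, isEmptyElim⟩
  obtain ⟨b, -⟩ := card_pos.1 (hu.trans_lt' Fintype.card_pos)
  have : Nonempty β := ⟨b⟩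
  obtain ⟨f₁, hf₁, hinj₁⟩ := (s : Set α).toFinite.exists_injOn_of_encard_le (t := (t : Set β))
    (by simpa [Set.encard_coe_eq_coe_finsetCard])
  have himage : s.image f₁ ⊆ u := image_subset_iff.2 fun a ha => htu (hf₁ ha)
  obtain ⟨f₂, hf₂, hinj₂⟩ := ((sᶜ : Finset α) : Set α).toFinite.exists_injOn_of_encard_le
    (t := ((u \ s.image f₁ : Finset β) : Set β)) (by
      simp only [Set.encard_coe_eq_coe_finsetCard, Nat.cast_le]
      rw [card_compl, card_sdiff_of_subset himage, card_image_of_injOn hinj₁]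
      omega)
  refine ⟨(s : Set α).piecewise f₁ f₂, (Set.injective_piecewise_iff _).2 ⟨hinj₁, ?_, ?_⟩, ?_, ?_⟩
  · simpa using hinj₂
  · intro x hx y hy h
    have := hf₂ (show y ∈ ((sᶜ : Finset α) : Set α) by simpa using hy)
    exact (mem_sdiff.1 this).2 (mem_image.2 ⟨x, hx, h⟩)
  · intro a ha
    rw [Set.piecewise_eq_of_mem _ _ _ ha]
    exact hf₁ ha
  · intro a
    by_cases ha : a ∈ (s : Set α)
    · rw [Set.piecewise_eq_of_mem _ _ _ ha]
      exact htu (hf₁ ha)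
    · rw [Set.piecewise_eq_of_notMem _ _ _ ha]
      have := hf₂ (show a ∈ ((sᶜ : Finset α) : Set α) by simpa using ha)
      exact (mem_sdiff.1 this).1

theorem containsCopy_of_isIndepSet {V β : Type*} [Fintype V] [DecidableEq β]
    {G : SimpleGraph V} {C : SimpleGraph β} {I : Finset V} (hI : G.IsIndepSet I)
    {U W X : Finset β} (hU : C.IsClique U) (hWU : ∀ w ∈ W, ∀ u ∈ U \ X, C.Adj w u)
    (hcompl : Fintype.card V - #I ≤ #(U \ X)) (hcard : Fintype.card V ≤ #(W ∪ U)) :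
    ContainsCopy C G := by
  classical
  obtain ⟨f, hf, hfI, hfWU⟩ := exists_injective_mapsTo_of_card_le (s := Iᶜ)
    (sdiff_subset.trans subset_union_right) (by rwa [card_compl]) hcard
  refine ⟨⟨f, hf⟩, fun a b hab => ?_⟩
  wlog ha : a ∉ I generalizing a b
  · refine (this b a hab.symm fun hb => ?_).symm
    exact hI (not_not.1 ha) hb hab.ne hab
  have hfa : f a ∈ U \ X := hfI (by simpa using ha)
  rcases mem_union.1 (hfWU b) with hb | hb
  · exact (hWU _ hb _ hfa).symm
  · exact hU (mem_sdiff.1 hfa).1 hb (hf.ne hab.ne)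

theorem tCopies_top_adj {t : ℕ} (i : Fin t) :
    (tCopies t (⊤ : SimpleGraph (Fin 2))).Adj (i, 0) (i, 1) :=
  ⟨rfl, by simp⟩

section PairMatching

variable {α : Type*} {D : SimpleGraph α} {M M' : Finset (α × α)}
  {p : α × α} {a b : α}

/-- A matching of `D`, given as a finset of oriented edges `(p.1, p.2)`. -/
structure IsPairMatching (D : SimpleGraph α) (M : Finset (α × α)) : Prop where
  adj : ∀ p ∈ M, D.Adj p.1 p.2
  ne : ∀ p ∈ M, ∀ q ∈ M, p ≠ q → p.1 ≠ q.1 ∧ p.1 ≠ q.2 ∧ p.2 ≠ q.1 ∧ p.2 ≠ q.2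

theorem IsPairMatching.subset (h : IsPairMatching D M) (hM' : M' ⊆ M) : IsPairMatching D M' :=
  ⟨fun p hp => h.adj p (hM' hp), fun p hp q hq => h.ne p (hM' hp) q (hM' hq)⟩

theorem IsPairMatching.injOn_of_endpoint (h : IsPairMatching D M) {w : α × α → α}
    (hw : ∀ p ∈ M, w p = p.1 ∨ w p = p.2) : Set.InjOn w M := by
  intro p hp q hq hpq
  by_contra hne
  obtain ⟨h1, h2, h3, h4⟩ := h.ne p hp q hq hne
  rcases hw p hp with e | e <;> rcases hw q hq with e' | e' <;> rw [e, e'] at hpq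
  exacts [h1 hpq, h2 hpq, h3 hpq, h4 hpq]

theorem IsPairMatching.containsCopy {t : ℕ} (h : IsPairMatching D M) (ht : t ≤ #M) :
    ContainsCopy D (tCopies t (⊤ : SimpleGraph (Fin 2))) := by
  obtain ⟨g, hg⟩ := Function.Embedding.exists_of_card_le_finset (α := Fin t) (s := M)
    (by simpa using ht)
  have hgM : ∀ i, g i ∈ M := fun i => hg ⟨i, rfl⟩
  let f : Fin t × Fin 2 → α := fun x => ![(g x.1).1, (g x.1).2] x.2
  have hf : Function.Injective f := by
    rintro ⟨i, a⟩ ⟨j, b⟩ hab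
    by_cases hij : i = j
    · subst hij
      have := (h.adj _ (hgM i)).ne
      fin_cases a <;> fin_cases b <;> simp_all [f]
    · obtain ⟨h1, h2, h3, h4⟩ := h.ne _ (hgM i) _ (hgM j) (g.injective.ne hij)
      fin_cases a <;> fin_cases b <;> simp_all [f]
  refine ⟨⟨f, hf⟩, ?_⟩
  rintro ⟨i, a⟩ ⟨j, b⟩ ⟨rfl, hab⟩
  have := h.adj _ (hgM i)
  fin_cases a <;> fin_cases b <;> simp_all [f, this.symm]

def IsMaxPairMatching (D : SimpleGraph α) (M : Finset (α × α)) : Prop :=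
  IsPairMatching D M ∧ ∀ M', IsPairMatching D M' → #M' ≤ #M

theorem exists_isMaxPairMatching [Fintype α] (D : SimpleGraph α) :
    ∃ M, IsMaxPairMatching D M := by
  classical
  obtain ⟨M, hM, hmax⟩ := exists_max_image {M : Finset (α × α) | IsPairMatching D M} card
    ⟨∅, by simpa using (⟨by simp, by simp⟩ : IsPairMatching D ∅)⟩
  exact ⟨M, (mem_filter.1 hM).2, fun M' hM' => hmax M' (by simpa using hM')⟩

variable [DecidableEq α]

def matchedVerts (M : Finset (α × α)) : Finset α := M.biUnion fun p => {p.1, p.2}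

theorem mem_matchedVerts : a ∈ matchedVerts M ↔ ∃ p ∈ M, a = p.1 ∨ a = p.2 := by
  simp [matchedVerts]

theorem fst_mem_matchedVerts (hp : p ∈ M) : p.1 ∈ matchedVerts M :=
  mem_matchedVerts.2 ⟨p, hp, .inl rfl⟩

theorem snd_mem_matchedVerts (hp : p ∈ M) : p.2 ∈ matchedVerts M :=
  mem_matchedVerts.2 ⟨p, hp, .inr rfl⟩

theorem matchedVerts_mono (h : M' ⊆ M) : matchedVerts M' ⊆ matchedVerts M :=
  biUnion_subset_biUnion_of_subset_left _ h

theorem matchedVerts_insert :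
    matchedVerts (insert p M) = {p.1, p.2} ∪ matchedVerts M :=
  biUnion_insert

theorem IsPairMatching.insert (h : IsPairMatching D M) (hab : D.Adj a b)
    (ha : a ∉ matchedVerts M) (hb : b ∉ matchedVerts M) : IsPairMatching D (insert (a, b) M) := by
  have hfar : ∀ q ∈ M, a ≠ q.1 ∧ a ≠ q.2 ∧ b ≠ q.1 ∧ b ≠ q.2 := fun q hq =>
    ⟨fun e => ha (e ▸ fst_mem_matchedVerts hq), fun e => ha (e ▸ snd_mem_matchedVerts hq),
      fun e => hb (e ▸ fst_mem_matchedVerts hq), fun e => hb (e ▸ snd_mem_matchedVerts hq)⟩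
  refine ⟨?_, ?_⟩
  · simpa [hab] using h.adj
  · simp only [Finset.mem_insert]
    rintro p (rfl | hp) q (rfl | hq) hpq
    · exact absurd rfl hpq
    · exact hfar q hq
    · obtain ⟨h1, h2, h3, h4⟩ := hfar p hp
      exact ⟨h1.symm, h3.symm, h2.symm, h4.symm⟩
    · exact h.ne p hp q hq hpq

theorem card_insert_of_fst_notMem_matchedVerts (ha : a ∉ matchedVerts M) :
    #(insert (a, b) M) = #M + 1 :=
  card_insert_of_notMem fun h => ha (fst_mem_matchedVerts h)

theorem IsPairMatching.notMem_matchedVerts_erase (h : IsPairMatching D M) (hp : p ∈ M) :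
    p.1 ∉ matchedVerts (M.erase p) ∧ p.2 ∉ matchedVerts (M.erase p) := by
  simp only [mem_matchedVerts, mem_erase]
  constructor <;> rintro ⟨q, ⟨hqp, hq⟩, e | e⟩ <;>
    obtain ⟨h1, h2, h3, h4⟩ := h.ne p hp q hq hqp.symm
  exacts [h1 e, h2 e, h3 e, h4 e]

theorem IsPairMatching.card_matchedVerts (h : IsPairMatching D M) :
    #(matchedVerts M) = 2 * #M := by
  rw [matchedVerts, card_biUnion, sum_const_nat fun p hp => card_pair (h.adj p hp).ne, mul_comm]
  intro p hp q hq hpq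
  obtain ⟨h1, h2, h3, h4⟩ := h.ne p hp q hq hpq
  simp [h1.symm, h2.symm, h3.symm, h4.symm]

theorem IsMaxPairMatching.isIndepSet_compl_matchedVerts [Fintype α] (h : IsMaxPairMatching D M) :
    D.IsIndepSet ↑(matchedVerts M)ᶜ := by
  intro a ha b hb _ hab
  simp only [coe_compl, Set.mem_compl_iff, mem_coe] at ha hb
  have := h.2 _ (h.1.insert hab ha hb)
  rw [card_insert_of_fst_notMem_matchedVerts ha] at this
  omega

/-- Otherwise `x, p.1, p.2, u` is an augmenting path. -/
theorem IsMaxPairMatching.eq_of_adj_of_adj (h : IsMaxPairMatching D M) (hp : p ∈ M) {x u : α}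
    (hx : x ∉ matchedVerts M) (hu : u ∉ matchedVerts M) (hpx : D.Adj p.1 x) (hpu : D.Adj p.2 u) :
    u = x := by
  by_contra hux
  have hM := h.1.subset (erase_subset p M)
  obtain ⟨hp1, hp2⟩ := h.1.notMem_matchedVerts_erase hp
  have hsub := matchedVerts_mono (erase_subset p M)
  have hp1' : p.1 ∉ matchedVerts (insert (p.2, u) (M.erase p)) := by
    simp only [matchedVerts_insert, Finset.mem_union, mem_insert, mem_singleton, not_or]
    exact ⟨⟨(h.1.adj p hp).ne, fun e => hu (e ▸ fst_mem_matchedVerts hp)⟩, hp1⟩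
  have hx' : x ∉ matchedVerts (insert (p.2, u) (M.erase p)) := by
    simp only [matchedVerts_insert, Finset.mem_union, mem_insert, mem_singleton, not_or]
    exact ⟨⟨fun e => hx (e ▸ snd_mem_matchedVerts hp), Ne.symm hux⟩, fun e => hx (hsub e)⟩
  have hM' := (hM.insert hpu hp2 fun e => hu (hsub e)).insert hpx hp1' hx'
  have := h.2 _ hM'
  rw [card_insert_of_fst_notMem_matchedVerts hp1', card_insert_of_fst_notMem_matchedVerts hp2,
    card_erase_of_mem hp] at this
  have := card_pos.2 ⟨p, hp⟩
  omega

theorem IsMaxPairMatching.exists_endpoint (h : IsMaxPairMatching D M) :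
    ∃ w z : α × α → α, ∀ p ∈ M,
      (w p = p.1 ∨ w p = p.2) ∧ ∀ u ∉ matchedVerts M, D.Adj (w p) u → u = z p := by
  have : ∀ p, ∃ w z, p ∈ M → (w = p.1 ∨ w = p.2) ∧ ∀ u ∉ matchedVerts M, D.Adj w u → u = z := by
    intro p
    by_cases hx : ∃ x ∉ matchedVerts M, D.Adj p.1 x
    · obtain ⟨x, hx, hpx⟩ := hx
      exact ⟨p.2, x, fun hp => ⟨.inr rfl, fun u hu hpu => h.eq_of_adj_of_adj hp hx hu hpx hpu⟩⟩
    · exact ⟨p.1, p.1, fun _ => ⟨.inl rfl, fun u hu hpu => (hx ⟨u, hu, hpu⟩).elim⟩⟩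
  choose w z hwz using this
  exact ⟨w, z, hwz⟩

end PairMatching

theorem isRamsey_of_isIndepSet {V : Type*} [Fintype V] (G : SimpleGraph V) {t : ℕ} (ht : 1 ≤ t)
    {I : Finset V} (hI : G.IsIndepSet I) (hIcard : 2 * t - 2 ≤ #I) :
    IsRamsey G (tCopies t (⊤ : SimpleGraph (Fin 2))) (Fintype.card V + t - 1) := by
  classical
  intro C
  refine or_iff_not_imp_right.2 fun hblue => ?_
  obtain ⟨M, hM⟩ := exists_isMaxPairMatching Cᶜ
  have hMt : #M < t := not_le.1 fun h => hblue (hM.1.containsCopy h)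
  obtain ⟨w, z, hwz⟩ := hM.exists_endpoint
  have hwM : ∀ p ∈ M, w p ∈ matchedVerts M := fun p hp => by
    rcases (hwz p hp).1 with e | e <;> rw [e]
    exacts [fst_mem_matchedVerts hp, snd_mem_matchedVerts hp]
  have hW : #(M.image w) = #M :=
    card_image_of_injOn (hM.1.injOn_of_endpoint fun p hp => (hwz p hp).1)
  have hU : #(matchedVerts M)ᶜ = Fintype.card V + t - 1 - 2 * #M := by
    rw [card_compl, hM.1.card_matchedVerts, Fintype.card_fin]
  have hX : #(M.image z) ≤ #M := card_image_le
  refine containsCopy_of_isIndepSet hI (U := (matchedVerts M)ᶜ) (W := M.image w) (X := M.image z)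
    ((isIndepSet_compl C).1 hM.isIndepSet_compl_matchedVerts) ?_ ?_ ?_
  · simp only [mem_image, mem_sdiff, mem_compl, forall_exists_index, and_imp]
    rintro _ p hp rfl u hu hzu
    by_contra hC
    exact hzu ⟨p, hp, ((hwz p hp).2 u hu ((compl_adj C _ _).2
      ⟨fun e => hu (e ▸ hwM p hp), hC⟩)).symm⟩
  · refine le_trans ?_ (le_card_sdiff _ _)
    omega
  · rw [card_union_of_disjoint (disjoint_left.2 fun x hx => by
      obtain ⟨p, hp, rfl⟩ := mem_image.1 hx
      exact fun h => mem_compl.1 h (hwM p hp)), hW, hU]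
    omega

def cliqueOn {α : Type*} (s : Set α) : SimpleGraph α where
  Adj a b := a ≠ b ∧ a ∈ s ∧ b ∈ s
  symm := ⟨fun _ _ h => ⟨h.1.symm, h.2.2, h.2.1⟩⟩
  loopless := ⟨fun _ h => h.1 rfl⟩

theorem ContainsCopy.card_le_of_cliqueOn {α V : Type*} [Fintype V] {G : SimpleGraph V}
    (hG : ∀ v, ¬G.IsIsolated v) {s : Finset α} (h : ContainsCopy (cliqueOn (s : Set α)) G) :
    Fintype.card V ≤ #s := by
  obtain ⟨f, hf⟩ := h
  refine card_univ (α := V) ▸ card_le_card_of_injOn f (fun v _ => ?_) f.injective.injOn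
  obtain ⟨w, hvw⟩ := not_forall_not.1 (hG v)
  exact (hf v w hvw).2.1

theorem ContainsCopy.le_card_compl_of_compl_cliqueOn {α : Type*} [Fintype α] [DecidableEq α]
    {s : Finset α} {t : ℕ}
    (h : ContainsCopy (cliqueOn (s : Set α))ᶜ (tCopies t (⊤ : SimpleGraph (Fin 2)))) :
    t ≤ #sᶜ := by
  obtain ⟨f, hf⟩ := h
  let g : Fin t → α := fun i => f (i, if f (i, 0) ∈ s then 1 else 0)
  have hg : Function.Injective g := fun i j hij => congrArg Prod.fst (f.injective hij)
  have hgs : ∀ i, g i ∈ sᶜ := fun i => by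
    have hne := (compl_adj _ _ _).1 (hf _ _ (tCopies_top_adj i))
    simp only [g, mem_compl]
    split_ifs with h0
    · exact fun h1 => hne.2 ⟨hne.1, h0, h1⟩
    · exact h0
  simpa using card_le_card_of_injOn (s := univ) g (fun i _ => hgs i) hg.injOn

theorem not_isRamsey_of_lt {V : Type*} [Fintype V] [Nonempty V] {G : SimpleGraph V}
    (hG : ∀ v, ¬G.IsIsolated v) {t N : ℕ} (ht : 1 ≤ t) (hN : N < Fintype.card V + t - 1) :
    ¬IsRamsey G (tCopies t (⊤ : SimpleGraph (Fin 2))) N := by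
  intro h
  obtain ⟨s, -, hs⟩ := exists_subset_card_eq (s := (univ : Finset (Fin N)))
    (n := min N (Fintype.card V - 1)) (by simp)
  have := Fintype.card_pos (α := V)
  rcases h (cliqueOn (s : Set (Fin N))) with hred | hblue
  · have := ContainsCopy.card_le_of_cliqueOn hG hred
    omega
  · have := ContainsCopy.le_card_compl_of_compl_cliqueOn hblue
    rw [card_compl, Fintype.card_fin] at this
    omega

theorem ramsey_eq_of_isRamsey_of_forall_lt {α β : Type*} {G : SimpleGraph α} {H : SimpleGraph β}
    {N : ℕ} (h : IsRamsey G H N) (hlt : ∀ M < N, ¬IsRamsey G H M) : ramsey G H = N :=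
  le_antisymm (Nat.sInf_le h) (le_csInf ⟨N, h⟩ fun M hM => not_lt.1 fun hMN => hlt M hMN hM)

theorem stmt9_general {V : Type*} [Fintype V] (G : SimpleGraph V) [DecidableRel G.Adj]
    (n k t : ℕ) (ht : 1 ≤ t) (hn : Fintype.card V = n) (hconn : G.Connected)
    (hedge : G.edgeFinset.card = n + k - 2)
    (c : ℚ) (hc : c = if t ≤ 2 then 1 / ((t : ℚ) + 2) else 1 / (4 * (t : ℚ) - 5))
    (hk2 : (k : ℚ) ≤ c * (n : ℚ) ^ 2)
    (hn2 : 3 * (c⁻¹ * (c⁻¹ - 1) / 2) ≤ (n : ℚ)) :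
    ramsey G (tCopies t (⊤ : SimpleGraph (Fin 2))) = n + t - 1 := by
  subst hn
  have hc' : 3 ≤ c⁻¹ ∧ 4 * (t : ℚ) - 5 ≤ c⁻¹ := by
    have ht' : (1 : ℚ) ≤ t := by exact_mod_cast ht
    split_ifs at hc with h <;> rw [hc, one_div, inv_inv]
    · have : (t : ℚ) ≤ 2 := by exact_mod_cast h
      constructor <;> linarith
    · have : (3 : ℚ) ≤ t := by exact_mod_cast (not_le.1 h)
      constructor <;> linarith
  have hn9 : 9 ≤ Fintype.card V := by
    have : (9 : ℚ) ≤ Fintype.card V := by nlinarith [hc'.1]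
    exact_mod_cast this
  obtain ⟨I, hI, hIcard⟩ :=
    exists_isIndepSet_of_card_edgeFinset_le G ht hc'.2 (by omega) hk2 hn2
  have : Nontrivial V := Fintype.one_lt_card_iff_nontrivial.1 (by omega)
  exact ramsey_eq_of_isRamsey_of_forall_lt (isRamsey_of_isIndepSet G ht hI hIcard)
    fun N hN => not_isRamsey_of_lt hconn.preconnected.not_isIsolated ht hN

theorem stmt9 {V : Type*} [Fintype V] [DecidableEq V] (G : SimpleGraph V) [DecidableRel G.Adj]
    (n k t : ℕ) (ht : 1 ≤ t) (hn : Fintype.card V = n) (hconn : G.Connected)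
    (hedge : G.edgeFinset.card = n + k - 2)
    (c : ℚ) (hc : c = if t ≤ 2 then 1 / ((t : ℚ) + 2) else 1 / (4 * (t : ℚ) - 5))
    (hk1 : 1 ≤ k) (hk2 : (k : ℚ) ≤ c * (n : ℚ) ^ 2)
    (hn2 : 3 * (c⁻¹ * (c⁻¹ - 1) / 2) ≤ (n : ℚ)) :
    ramsey G (tCopies t (⊤ : SimpleGraph (Fin 2))) = n + t - 1 :=
  stmt9_general G n k t ht hn hconn hedge c hc hk2 hn2
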